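/- arXiv:2404.06471 — 4 statements merged into one kernel-verified Lean document; each statement's English description precedes it below -/
import Mathlib

section
/- Let G be the averaging operator (G∘f)(z) = (δ(z)/2r) ∫_{z−r}^{z+r} f(u) du (restricting the integral to [-1,1] and normalizing by the measure of the intersection). Suppose g : [-1,1] → ℝ is Lipschitz with constant C and ‖g‖_∞ ≤ M, and δ is differentiable with |δ'| ≤ C_δ and ‖δ‖_∞ ≤ δ̄. Then G∘g is Lipschitz on [-1,1] with constant C_δ·M + δ̄·C. -/
/-!
Parametrize the window `[-1, 1] ∩ (z - r, z + r)` affinely by `[0, 1]`: the normalized integral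
over the window becomes `∫₀¹ g (windowPoint z t) dt`. Both endpoints of the window are
`1`-Lipschitz in `z`, hence so is `windowPoint · t` for every `t`, and the averaged function
is `C`-Lipschitz and bounded by `M`. The mean value theorem makes `δ` `Cδ`-Lipschitz, and the
product rule `δx Fx - δy Fy = (δx - δy) Fx + δy (Fx - Fy)` gives the constant `Cδ M + δ̄ C`.
-/

open MeasureTheory Set Filter AffineMap

theorem abs_lineMap_sub_lineMap_le {a b a' b' d t : ℝ} (ht : t ∈ Icc 0 1)
    (ha : |a - a'| ≤ d) (hb : |b - b'| ≤ d) :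
    |lineMap a b t - lineMap a' b' t| ≤ d := by
  rw [← vsub_eq_sub, lineMap_vsub_lineMap, abs_le, ← mem_Icc]
  exact (convex_Icc (-d) d).lineMap_mem (abs_le.1 ha) (abs_le.1 hb) ht

theorem inv_sub_mul_intervalIntegral_eq_integral_lineMap (g : ℝ → ℝ) {a b : ℝ} (h : a ≠ b) :
    (b - a)⁻¹ * ∫ u in a..b, g u = ∫ t in (0:ℝ)..1, g (lineMap a b t) := by
  simp_rw [lineMap_apply_ring', mul_comm _ (b - a),
    intervalIntegral.integral_comp_mul_add _ (sub_ne_zero.2 h.symm)]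
  simp

theorem Icc_inter_Ioo_ae_eq (a b c d : ℝ) :
    (Icc a b ∩ Ioo c d : Set ℝ) =ᵐ[volume] Ioo (max a c) (min b d) := by
  rw [← Ioo_inter_Ioo]
  exact Ioo_ae_eq_Icc.symm.inter EventuallyEq.rfl

theorem inv_volume_mul_setIntegral_Icc_inter_Ioo (g : ℝ → ℝ) {a b c d : ℝ}
    (h : max a c < min b d) :
    (volume (Icc a b ∩ Ioo c d)).toReal⁻¹ * ∫ u in Icc a b ∩ Ioo c d, g u
      = ∫ t in (0:ℝ)..1, g (lineMap (max a c) (min b d) t) := by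
  have hae := Icc_inter_Ioo_ae_eq a b c d
  rw [measure_congr hae, setIntegral_congr_set hae, Real.volume_Ioo,
    ENNReal.toReal_ofReal (sub_nonneg.2 h.le), ← integral_Ioc_eq_integral_Ioo,
    ← intervalIntegral.integral_of_le h.le]
  exact inv_sub_mul_intervalIntegral_eq_integral_lineMap g h.ne

noncomputable section Window

variable {g : ℝ → ℝ} {a b r x y z t : ℝ}

def windowPoint (a b r z t : ℝ) : ℝ :=
  lineMap (max a (z - r)) (min b (z + r)) t

def windowAverage (g : ℝ → ℝ) (a b r z : ℝ) : ℝ :=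
  ∫ t in (0:ℝ)..1, g (windowPoint a b r z t)

theorem windowPoint_mem_Icc (hr : 0 ≤ r) (hz : z ∈ Icc a b) (ht : t ∈ Icc 0 1) :
    windowPoint a b r z t ∈ Icc a b :=
  (convex_Icc a b).lineMap_mem ⟨le_max_left _ _, max_le (hz.1.trans hz.2) (by linarith [hz.2])⟩
    ⟨le_min (hz.1.trans hz.2) (by linarith [hz.1]), min_le_left _ _⟩ ht

theorem abs_windowPoint_sub_le (ht : t ∈ Icc 0 1) :
    |windowPoint a b r x t - windowPoint a b r y t| ≤ |x - y| := by
  refine abs_lineMap_sub_lineMap_le ht ?_ ?_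
  · simpa using abs_max_sub_max_le_max a (x - r) a (y - r)
  · simpa using abs_min_sub_min_le_max b (x + r) b (y + r)

theorem inv_volume_mul_setIntegral_eq_windowAverage (hab : a < b) (hr : 0 < r)
    (hz : z ∈ Icc a b) :
    (volume (Icc a b ∩ Ioo (z - r) (z + r))).toReal⁻¹ *
        ∫ u in Icc a b ∩ Ioo (z - r) (z + r), g u = windowAverage g a b r z :=
  inv_volume_mul_setIntegral_Icc_inter_Ioo g <| max_lt
    (lt_min hab (by linarith [hz.1])) (lt_min (by linarith [hz.2]) (by linarith))

theorem abs_windowAverage_le {M : ℝ} (hr : 0 ≤ r) (hg : ∀ u ∈ Icc a b, |g u| ≤ M)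
    (hz : z ∈ Icc a b) : |windowAverage g a b r z| ≤ M := by
  rw [windowAverage, ← Real.norm_eq_abs]
  refine (intervalIntegral.norm_integral_le_of_norm_le_const (C := M) fun t ht ↦ ?_).trans_eq
    (by simp)
  have ht : t ∈ Icc (0:ℝ) 1 := Ioc_subset_Icc_self (by rwa [uIoc_of_le zero_le_one] at ht)
  exact hg _ (windowPoint_mem_Icc hr hz ht)

theorem intervalIntegrable_comp_windowPoint (hg : ContinuousOn g (Icc a b)) (hr : 0 ≤ r)
    (hz : z ∈ Icc a b) :
    IntervalIntegrable (fun t ↦ g (windowPoint a b r z t)) volume 0 1 := by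
  refine (hg.comp lineMap_continuous.continuousOn fun t ht ↦ ?_).intervalIntegrable
  exact windowPoint_mem_Icc hr hz (by rwa [uIcc_of_le zero_le_one] at ht)

theorem abs_windowAverage_sub_le {C : ℝ} (hab : a < b) (hr : 0 ≤ r)
    (hg : ∀ x ∈ Icc a b, ∀ y ∈ Icc a b, |g x - g y| ≤ C * |x - y|)
    (hx : x ∈ Icc a b) (hy : y ∈ Icc a b) :
    |windowAverage g a b r x - windowAverage g a b r y| ≤ C * |x - y| := by
  have hC : 0 ≤ C := nonneg_of_mul_nonneg_left
    ((abs_nonneg _).trans (hg a ⟨le_rfl, hab.le⟩ b ⟨hab.le, le_rfl⟩))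
    (abs_pos.2 (sub_ne_zero.2 hab.ne))
  have hgc : ContinuousOn g (Icc a b) :=
    (LipschitzOnWith.of_dist_le' (by simpa only [Real.dist_eq] using hg)).continuousOn
  rw [windowAverage, windowAverage, ← intervalIntegral.integral_sub
    (intervalIntegrable_comp_windowPoint hgc hr hx) (intervalIntegrable_comp_windowPoint hgc hr hy),
    ← Real.norm_eq_abs]
  refine (intervalIntegral.norm_integral_le_of_norm_le_const (C := C * |x - y|)
    fun t ht ↦ ?_).trans_eq (by simp)
  have ht : t ∈ Icc (0:ℝ) 1 := Ioc_subset_Icc_self (by rwa [uIoc_of_le zero_le_one] at ht)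
  exact (hg _ (windowPoint_mem_Icc hr hx ht) _ (windowPoint_mem_Icc hr hy ht)).trans
    (mul_le_mul_of_nonneg_left (abs_windowPoint_sub_le ht) hC)

end Window

theorem abs_mul_sub_mul_le (a b c d : ℝ) : |a * b - c * d| ≤ |a - c| * |b| + |c| * |b - d| := by
  calc |a * b - c * d| = |(a - c) * b + c * (b - d)| := by congr 1; ring
    _ ≤ |a - c| * |b| + |c| * |b - d| := by
      simpa only [abs_mul] using abs_add_le ((a - c) * b) (c * (b - d))

theorem stmt_1 (r C M Cδ δbar : ℝ) (hr : 0 < r)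
    (δ δ' g : ℝ → ℝ)
    (hδderiv : ∀ z, HasDerivAt δ (δ' z) z)
    (hδ' : ∀ z ∈ Icc (-1:ℝ) 1, |δ' z| ≤ Cδ)
    (hδb : ∀ z ∈ Icc (-1:ℝ) 1, |δ z| ≤ δbar)
    (hgLip : ∀ x ∈ Icc (-1:ℝ) 1, ∀ y ∈ Icc (-1:ℝ) 1, |g x - g y| ≤ C * |x - y|)
    (hgb : ∀ z ∈ Icc (-1:ℝ) 1, |g z| ≤ M)
    (G : ℝ → ℝ)
    (hG : ∀ z, G z = δ z * ((volume (Icc (-1:ℝ) 1 ∩ Ioo (z - r) (z + r))).toReal)⁻¹ *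
        ∫ u in Icc (-1:ℝ) 1 ∩ Ioo (z - r) (z + r), g u) :
    ∀ x ∈ Icc (-1:ℝ) 1, ∀ y ∈ Icc (-1:ℝ) 1,
      |G x - G y| ≤ (Cδ * M + δbar * C) * |x - y| := by
  intro x hx y hy
  set F := windowAverage g (-1) 1 r
  have hGF : ∀ z ∈ Icc (-1:ℝ) 1, G z = δ z * F z := fun z hz ↦ by
    rw [hG, mul_assoc, inv_volume_mul_setIntegral_eq_windowAverage (by norm_num) hr hz]
  have hδLip : |δ x - δ y| ≤ Cδ * |x - y| := by
    simpa only [Real.norm_eq_abs] using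
      (convex_Icc (-1:ℝ) 1).norm_image_sub_le_of_norm_hasDerivWithin_le
        (fun z _ ↦ (hδderiv z).hasDerivWithinAt) hδ' hy hx
  have hFLip : |F x - F y| ≤ C * |x - y| :=
    abs_windowAverage_sub_le (by norm_num) hr.le hgLip hx hy
  calc |G x - G y| ≤ |δ x - δ y| * |F x| + |δ y| * |F x - F y| := by
        rw [hGF x hx, hGF y hy]; exact abs_mul_sub_mul_le _ _ _ _
    _ ≤ Cδ * |x - y| * M + δbar * (C * |x - y|) :=
        add_le_add
          (mul_le_mul hδLip (abs_windowAverage_le hr.le hgb hx) (abs_nonneg _)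
            ((abs_nonneg _).trans hδLip))
          (mul_le_mul (hδb y hy) hFLip (abs_nonneg _) ((abs_nonneg _).trans (hδb y hy)))
    _ = (Cδ * M + δbar * C) * |x - y| := by ring
end

section
/- Under the same setup, if g : [-1,1] → ℝ is Lipschitz with constant C and ‖g‖_∞ ≤ M, and if δ̄ < 1, then the Neumann series (I−G)^{-1}∘g = Σ_{k=0}^∞ G^k∘g converges uniformly and defines a Lipschitz function on [-1,1] with Lipschitz constant at most C_δ·M/(1−δ̄)² + C/(1−δ̄). -/
open MeasureTheory Set

noncomputable def phiAux (r z x : ℝ) : ℝ :=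
  (min 1 (z + r) - max (-1) (z - r)) * x + max (-1) (z - r)

lemma ab_lt {r z : ℝ} (hr : 0 < r) (hz : z ∈ Icc (-1:ℝ) 1) :
    max (-1) (z - r) < min 1 (z + r) := by
  obtain ⟨h1, h2⟩ := hz
  apply max_lt <;> apply lt_min <;> linarith

lemma phi_mem {r z x : ℝ} (hr : 0 < r) (hz : z ∈ Icc (-1:ℝ) 1) (hx : x ∈ Icc (0:ℝ) 1) :
    phiAux r z x ∈ Icc (-1:ℝ) 1 := by
  have hab := (ab_lt hr hz).le
  obtain ⟨hx0, hx1⟩ := hx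
  have h1 : (-1:ℝ) ≤ max (-1) (z - r) := le_max_left _ _
  have h2 : min 1 (z + r) ≤ 1 := min_le_left _ _
  unfold phiAux
  constructor <;> nlinarith

lemma phi_lip {r z1 z2 x : ℝ} (hx : x ∈ Icc (0:ℝ) 1) :
    |phiAux r z1 x - phiAux r z2 x| ≤ |z1 - z2| := by
  obtain ⟨hx0, hx1⟩ := hx
  have ha : |max (-1) (z1 - r) - max (-1) (z2 - r)| ≤ |z1 - z2| := by
    rw [max_comm (-1:ℝ) (z1 - r), max_comm (-1:ℝ) (z2 - r)]
    simpa using abs_max_sub_max_le_abs (z1 - r) (z2 - r) (-1)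
  have hb : |min 1 (z1 + r) - min 1 (z2 + r)| ≤ |z1 - z2| := by
    have := abs_min_sub_min_le_max (1:ℝ) (z1 + r) 1 (z2 + r)
    simpa using this
  have key : phiAux r z1 x - phiAux r z2 x =
      (1 - x) * (max (-1) (z1 - r) - max (-1) (z2 - r)) +
      x * (min 1 (z1 + r) - min 1 (z2 + r)) := by unfold phiAux; ring
  rw [key]
  calc |(1 - x) * (max (-1) (z1 - r) - max (-1) (z2 - r)) +
        x * (min 1 (z1 + r) - min 1 (z2 + r))|
      ≤ |(1 - x) * (max (-1) (z1 - r) - max (-1) (z2 - r))| +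
        |x * (min 1 (z1 + r) - min 1 (z2 + r))| := abs_add_le _ _
    _ ≤ (1 - x) * |z1 - z2| + x * |z1 - z2| := by
        rw [abs_mul, abs_mul, abs_of_nonneg (by linarith : (0:ℝ) ≤ 1 - x),
          abs_of_nonneg hx0]
        have h1x : (0:ℝ) ≤ 1 - x := by linarith
        exact add_le_add (mul_le_mul_of_nonneg_left ha h1x)
          (mul_le_mul_of_nonneg_left hb hx0)
    _ = |z1 - z2| := by ring

noncomputable def GavgAux (r : ℝ) (f : ℝ → ℝ) (z : ℝ) : ℝ :=
  ∫ x in (0:ℝ)..1, f (phiAux r z x)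

lemma G_eq_aux {r : ℝ} (hr : 0 < r) (δ : ℝ → ℝ) (f : ℝ → ℝ)
    (G : (ℝ → ℝ) → ℝ → ℝ)
    (hG : ∀ f z, G f z = δ z * ((volume (Icc (-1:ℝ) 1 ∩ Ioo (z - r) (z + r))).toReal)⁻¹ *
        ∫ u in Icc (-1:ℝ) 1 ∩ Ioo (z - r) (z + r), f u)
    {z : ℝ} (hz : z ∈ Icc (-1:ℝ) 1) :
    G f z = δ z * GavgAux r f z := by
  set a := max (-1) (z - r) with ha
  set b := min 1 (z + r) with hb
  have hab : a < b := ab_lt hr hz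
  have hsub1 : Ioo a b ⊆ Icc (-1:ℝ) 1 ∩ Ioo (z - r) (z + r) := by
    intro u hu
    obtain ⟨hu1, hu2⟩ := hu
    have h1 : (-1:ℝ) ≤ a := le_max_left _ _
    have h2 : z - r ≤ a := le_max_right _ _
    have h3 : b ≤ 1 := min_le_left _ _
    have h4 : b ≤ z + r := min_le_right _ _
    exact ⟨⟨by linarith, by linarith⟩, by constructor <;> linarith⟩
  have hsub2 : Icc (-1:ℝ) 1 ∩ Ioo (z - r) (z + r) ⊆ Icc a b := by
    intro u ⟨⟨h1, h2⟩, h3, h4⟩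
    exact ⟨max_le (by linarith) (by linarith), le_min (by linarith) (by linarith)⟩
  have hmeas : volume (Icc (-1:ℝ) 1 ∩ Ioo (z - r) (z + r)) = ENNReal.ofReal (b - a) := by
    apply le_antisymm
    · calc volume (Icc (-1:ℝ) 1 ∩ Ioo (z - r) (z + r)) ≤ volume (Icc a b) :=
            measure_mono hsub2
        _ = ENNReal.ofReal (b - a) := Real.volume_Icc
    · calc ENNReal.ofReal (b - a) = volume (Ioo a b) := Real.volume_Ioo.symm
        _ ≤ _ := measure_mono hsub1
  have haeq : (Icc (-1:ℝ) 1 ∩ Ioo (z - r) (z + r) : Set ℝ) =ᵐ[volume] Ioo a b := by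
    rw [MeasureTheory.ae_eq_set]
    constructor
    · refine measure_mono_null ?_
        (((Set.countable_singleton b).insert a).measure_zero volume)
      intro u ⟨hu1, hu2⟩
      have h5 := hsub2 hu1
      simp only [mem_Ioo, not_and_or, not_lt] at hu2
      rcases hu2 with h | h
      · left; exact le_antisymm h h5.1
      · right; exact le_antisymm h5.2 h
    · have : Ioo a b \ (Icc (-1:ℝ) 1 ∩ Ioo (z - r) (z + r)) = ∅ :=
        Set.diff_eq_empty.2 hsub1
      simp [this]
  have hint : (∫ u in Icc (-1:ℝ) 1 ∩ Ioo (z - r) (z + r), f u) = ∫ u in Ioo a b, f u :=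
    setIntegral_congr_set haeq
  have hIoo : (∫ u in Ioo a b, f u) = ∫ u in a..b, f u := by
    rw [intervalIntegral.integral_of_le hab.le, integral_Ioc_eq_integral_Ioo]
  have hc : b - a ≠ 0 := sub_ne_zero.2 hab.ne'
  have hsubst : GavgAux r f z = (b - a)⁻¹ * ∫ u in a..b, f u := by
    unfold GavgAux phiAux
    rw [← ha, ← hb, intervalIntegral.integral_comp_mul_add f hc a]
    rw [smul_eq_mul]
    norm_num
  rw [hG, hmeas, hint, hIoo, ENNReal.toReal_ofReal (by linarith), hsubst]
  ring

lemma Gavg_bound {r : ℝ} (hr : 0 < r) {f : ℝ → ℝ} {B : ℝ}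
    (hfb : ∀ u ∈ Icc (-1:ℝ) 1, |f u| ≤ B) {z : ℝ} (hz : z ∈ Icc (-1:ℝ) 1) :
    |GavgAux r f z| ≤ B := by
  have := intervalIntegral.norm_integral_le_of_norm_le_const
    (C := B) (f := fun x => f (phiAux r z x)) (a := (0:ℝ)) (b := 1) ?_
  · simpa [GavgAux] using this
  · intro x hx
    rw [Set.uIoc_of_le (by norm_num : (0:ℝ) ≤ 1)] at hx
    exact hfb _ (phi_mem hr hz ⟨hx.1.le, hx.2⟩)

lemma Gavg_intble {r : ℝ} (hr : 0 < r) {f : ℝ → ℝ}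
    (hf : ContinuousOn f (Icc (-1:ℝ) 1)) {z : ℝ} (hz : z ∈ Icc (-1:ℝ) 1) :
    IntervalIntegrable (fun x => f (phiAux r z x)) volume 0 1 := by
  apply ContinuousOn.intervalIntegrable
  rw [Set.uIcc_of_le (by norm_num : (0:ℝ) ≤ 1)]
  apply hf.comp
  · exact (Continuous.continuousOn (by unfold phiAux; continuity))
  · intro x hx
    exact phi_mem hr hz hx

lemma Gavg_lip {r : ℝ} (hr : 0 < r) {f : ℝ → ℝ} {L : ℝ} (hL : 0 ≤ L)
    (hf : ContinuousOn f (Icc (-1:ℝ) 1))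
    (hfL : ∀ x ∈ Icc (-1:ℝ) 1, ∀ y ∈ Icc (-1:ℝ) 1, |f x - f y| ≤ L * |x - y|)
    {z1 z2 : ℝ} (h1 : z1 ∈ Icc (-1:ℝ) 1) (h2 : z2 ∈ Icc (-1:ℝ) 1) :
    |GavgAux r f z1 - GavgAux r f z2| ≤ L * |z1 - z2| := by
  have hi1 := Gavg_intble hr hf h1
  have hi2 := Gavg_intble hr hf h2
  have key : GavgAux r f z1 - GavgAux r f z2 =
      ∫ x in (0:ℝ)..1, (f (phiAux r z1 x) - f (phiAux r z2 x)) :=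
    (intervalIntegral.integral_sub hi1 hi2).symm
  rw [key]
  have := intervalIntegral.norm_integral_le_of_norm_le_const
    (C := L * |z1 - z2|) (f := fun x => f (phiAux r z1 x) - f (phiAux r z2 x))
    (a := (0:ℝ)) (b := 1) ?_
  · simpa using this
  · intro x hx
    rw [Set.uIoc_of_le (by norm_num : (0:ℝ) ≤ 1)] at hx
    have hx' : x ∈ Icc (0:ℝ) 1 := ⟨hx.1.le, hx.2⟩
    calc ‖f (phiAux r z1 x) - f (phiAux r z2 x)‖
        ≤ L * |phiAux r z1 x - phiAux r z2 x| :=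
          hfL _ (phi_mem hr h1 hx') _ (phi_mem hr h2 hx')
      _ ≤ L * |z1 - z2| := mul_le_mul_of_nonneg_left (phi_lip hx') hL

lemma contOn_of_lip {f : ℝ → ℝ} {s : Set ℝ} {L : ℝ}
    (h : ∀ x ∈ s, ∀ y ∈ s, |f x - f y| ≤ L * |x - y|) : ContinuousOn f s := by
  apply LipschitzOnWith.continuousOn (K := L.toNNReal)
  apply LipschitzOnWith.of_dist_le_mul
  intro x hx y hy
  calc dist (f x) (f y) = |f x - f y| := Real.dist_eq _ _
    _ ≤ L * |x - y| := h x hx y hy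
    _ ≤ L.toNNReal * |x - y| := by gcongr; exact Real.le_coe_toNNReal L
    _ = L.toNNReal * dist x y := by rw [Real.dist_eq]

theorem stmt_2 (r C M Cδ δbar : ℝ) (hr : 0 < r) (hδbar0 : 0 ≤ δbar) (hδbar1 : δbar < 1)
    (δ δ' g : ℝ → ℝ)
    (hδderiv : ∀ z, HasDerivAt δ (δ' z) z)
    (hδ' : ∀ z ∈ Icc (-1:ℝ) 1, |δ' z| ≤ Cδ)
    (hδb : ∀ z ∈ Icc (-1:ℝ) 1, |δ z| ≤ δbar)
    (hgLip : ∀ x ∈ Icc (-1:ℝ) 1, ∀ y ∈ Icc (-1:ℝ) 1, |g x - g y| ≤ C * |x - y|)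
    (hgb : ∀ z ∈ Icc (-1:ℝ) 1, |g z| ≤ M)
    (G : (ℝ → ℝ) → ℝ → ℝ)
    (hG : ∀ f z, G f z = δ z * ((volume (Icc (-1:ℝ) 1 ∩ Ioo (z - r) (z + r))).toReal)⁻¹ *
        ∫ u in Icc (-1:ℝ) 1 ∩ Ioo (z - r) (z + r), f u) :
    ∃ S : ℝ → ℝ,
      TendstoUniformlyOn (fun N z => ∑ k ∈ Finset.range N, (G^[k] g) z) S
        Filter.atTop (Icc (-1:ℝ) 1) ∧
      ∀ x ∈ Icc (-1:ℝ) 1, ∀ y ∈ Icc (-1:ℝ) 1,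
        |S x - S y| ≤ (Cδ * M / (1 - δbar) ^ 2 + C / (1 - δbar)) * |x - y| := by
  have h0I : (0:ℝ) ∈ Icc (-1:ℝ) 1 := by norm_num
  have h1I : (1:ℝ) ∈ Icc (-1:ℝ) 1 := by norm_num
  have hM : 0 ≤ M := le_trans (abs_nonneg _) (hgb 0 h0I)
  have hCδ : 0 ≤ Cδ := le_trans (abs_nonneg _) (hδ' 0 h0I)
  have hC : 0 ≤ C := by
    have := hgLip 0 h0I 1 h1I
    have h2 := abs_nonneg (g 0 - g 1)
    simp only [zero_sub, abs_neg, abs_one, mul_one] at this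
    linarith
  have hδLip : ∀ x ∈ Icc (-1:ℝ) 1, ∀ y ∈ Icc (-1:ℝ) 1, |δ x - δ y| ≤ Cδ * |x - y| := by
    intro x hx y hy
    have := (convex_Icc (-1:ℝ) 1).norm_image_sub_le_of_norm_hasDerivWithin_le
      (f := δ) (f' := δ') (fun z hz => (hδderiv z).hasDerivWithinAt)
      (fun z hz => by simpa [Real.norm_eq_abs] using hδ' z hz) hy hx
    simpa [Real.norm_eq_abs] using this
  set L : ℕ → ℝ := fun k => k * δbar ^ (k - 1) * Cδ * M + δbar ^ k * C with hL
  have hLnn : ∀ k, 0 ≤ L k := by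
    intro k; apply add_nonneg <;> positivity
  have key : ∀ k, (∀ z ∈ Icc (-1:ℝ) 1, |G^[k] g z| ≤ δbar ^ k * M) ∧
      (∀ x ∈ Icc (-1:ℝ) 1, ∀ y ∈ Icc (-1:ℝ) 1, |G^[k] g x - G^[k] g y| ≤ L k * |x - y|) := by
    intro k
    induction k with
    | zero =>
      constructor
      · intro z hz; simpa using hgb z hz
      · intro x hx y hy
        have hL0 : L 0 = C := by simp [hL]
        rw [hL0]; simpa using hgLip x hx y hy
    | succ k ih =>
      obtain ⟨ihb, ihl⟩ := ih
      have hcont : ContinuousOn (G^[k] g) (Icc (-1:ℝ) 1) := contOn_of_lip ihl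
      have hrw : ∀ z ∈ Icc (-1:ℝ) 1, G^[k+1] g z = δ z * GavgAux r (G^[k] g) z := by
        intro z hz
        rw [Function.iterate_succ_apply']
        exact G_eq_aux hr δ (G^[k] g) G hG hz
      have hpow : (k:ℝ) * δbar ^ (k - 1) * δbar = k * δbar ^ k := by
        cases k with
        | zero => simp
        | succ n => simp only [Nat.add_sub_cancel]; push_cast; ring
      constructor
      · intro z hz
        rw [hrw z hz, abs_mul]
        calc |δ z| * |GavgAux r (G^[k] g) z| ≤ δbar * (δbar ^ k * M) := by
              apply mul_le_mul (hδb z hz) (Gavg_bound hr ihb hz) (abs_nonneg _) hδbar0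
          _ = δbar ^ (k+1) * M := by ring
      · intro x hx y hy
        rw [hrw x hx, hrw y hy]
        set A := GavgAux r (G^[k] g)
        have e0 : δ x * A x - δ y * A y = (δ x - δ y) * A x + δ y * (A x - A y) := by ring
        have e1 : |δ x - δ y| * |A x| ≤ Cδ * |x - y| * (δbar ^ k * M) :=
          mul_le_mul (hδLip x hx y hy) (Gavg_bound hr ihb hx) (abs_nonneg _) (by positivity)
        have e2 : |δ y| * |A x - A y| ≤ δbar * (L k * |x - y|) :=
          mul_le_mul (hδb y hy) (Gavg_lip hr (hLnn k) hcont ihl hx hy) (abs_nonneg _) hδbar0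
        calc |δ x * A x - δ y * A y| ≤ |(δ x - δ y) * A x| + |δ y * (A x - A y)| := by
              rw [e0]; exact abs_add_le _ _
          _ = |δ x - δ y| * |A x| + |δ y| * |A x - A y| := by rw [abs_mul, abs_mul]
          _ ≤ Cδ * |x - y| * (δbar ^ k * M) + δbar * (L k * |x - y|) := by linarith
          _ = L (k+1) * |x - y| := by
              simp only [hL, Nat.add_sub_cancel]
              push_cast
              linear_combination (Cδ * M * |x - y|) * hpow
      -- end
  -- summability
  have hδne : (1:ℝ) - δbar ≠ 0 := by linarith
  have hgeo : HasSum (fun k : ℕ => δbar ^ k) (1 - δbar)⁻¹ :=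
    hasSum_geometric_of_lt_one hδbar0 hδbar1
  have hk : HasSum (fun k : ℕ => (k:ℝ) * δbar ^ k) (δbar / (1 - δbar) ^ 2) :=
    hasSum_coe_mul_geometric_of_norm_lt_one
      (by rwa [Real.norm_eq_abs, abs_of_nonneg hδbar0])
  have hshift1 : HasSum (fun n : ℕ => ((n:ℝ) + 1) * δbar ^ n) (1 / (1 - δbar) ^ 2) := by
    have := hk.add hgeo
    have heq : δbar / (1 - δbar) ^ 2 + (1 - δbar)⁻¹ = 1 / (1 - δbar) ^ 2 := by
      field_simp
      ring
    rw [heq] at this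
    convert this using 2 with n
    ring
  have hshift : HasSum (fun k : ℕ => (k:ℝ) * δbar ^ (k - 1)) (1 / (1 - δbar) ^ 2) := by
    have h2 : HasSum (fun n : ℕ => ((fun k : ℕ => (k:ℝ) * δbar ^ (k - 1)) (n + 1)))
        (1 / (1 - δbar) ^ 2) := by
      convert hshift1 using 2 with n
      simp only [Nat.add_sub_cancel]
      push_cast; ring
    have := (hasSum_nat_add_iff (f := fun k : ℕ => (k:ℝ) * δbar ^ (k - 1)) 1).1 h2
    simpa using this
  have hLsum : HasSum L (Cδ * M / (1 - δbar) ^ 2 + C / (1 - δbar)) := by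
    have := (hshift.mul_right (Cδ * M)).add (hgeo.mul_right C)
    have heq : 1 / (1 - δbar) ^ 2 * (Cδ * M) + (1 - δbar)⁻¹ * C =
        Cδ * M / (1 - δbar) ^ 2 + C / (1 - δbar) := by field_simp
    rw [heq] at this
    convert this using 2 with k
    · rfl
    simp only [hL]
    ring
  have hbound : ∀ (k : ℕ) (z : ℝ), z ∈ Icc (-1:ℝ) 1 → ‖G^[k] g z‖ ≤ δbar ^ k * M := by
    intro k z hz
    simpa [Real.norm_eq_abs] using (key k).1 z hz
  have hgsum : Summable (fun k : ℕ => δbar ^ k * M) :=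
    (summable_geometric_of_lt_one hδbar0 hδbar1).mul_right M
  refine ⟨fun z => ∑' k, G^[k] g z, tendstoUniformlyOn_tsum_nat hgsum hbound, ?_⟩
  intro x hx y hy
  have hsx : Summable (fun k => G^[k] g x) :=
    Summable.of_norm_bounded hgsum (fun k => hbound k x hx)
  have hsy : Summable (fun k => G^[k] g y) :=
    Summable.of_norm_bounded hgsum (fun k => hbound k y hy)
  have hsum2 : Summable (fun k => L k * |x - y|) := hLsum.summable.mul_right _
  have hdiff : ∀ k, ‖G^[k] g x - G^[k] g y‖ ≤ L k * |x - y| := by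
    intro k
    simpa [Real.norm_eq_abs] using (key k).2 x hx y hy
  have hsnorm : Summable (fun k => ‖G^[k] g x - G^[k] g y‖) :=
    Summable.of_nonneg_of_le (fun k => norm_nonneg _) hdiff hsum2
  have e0 : (∑' k, G^[k] g x) - (∑' k, G^[k] g y) = ∑' k, (G^[k] g x - G^[k] g y) :=
    (hsx.hasSum.sub hsy.hasSum).tsum_eq.symm
  rw [e0]
  calc |∑' k, (G^[k] g x - G^[k] g y)| ≤ ∑' k, ‖G^[k] g x - G^[k] g y‖ := by
        simpa [Real.norm_eq_abs] using norm_tsum_le_tsum_norm (f := fun k => G^[k] g x - G^[k] g y) hsnorm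
    _ ≤ ∑' k, L k * |x - y| := Summable.tsum_le_tsum hdiff hsnorm hsum2
    _ = (∑' k, L k) * |x - y| := tsum_mul_right
    _ = (Cδ * M / (1 - δbar) ^ 2 + C / (1 - δbar)) * |x - y| := by rw [hLsum.tsum_eq]
end

section
/- The resolvent applied to the indicator is monotone and its local average at 0 equals 1/(2(1−δ₀)) when δ is constant: if δ(z) ≡ δ₀ with |δ₀| < 1, then (1/(2r))∫_{−r}^{r} Σ_{k=0}^{K} (G_r^k ∘ 1{z ≥ 0})(x) dx = (1/2)Σ_{k=0}^{K} δ₀^k, for any K with (K+1)r ≤ 1/2. In particular, letting K → ∞ appropriately, (1/(2r))∫_{−r}^{r} ((I−G_r)^{-1} ∘ 1{z ≥ 0})(x) dx → 1/(2(1−δ₀)). -/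
open MeasureTheory Set

private lemma aux_ii {f : ℝ → ℝ} (hf : Measurable f) {C : ℝ} (hb : ∀ z, |f z| ≤ C)
    (a b : ℝ) : IntervalIntegrable f volume a b := by
  rw [intervalIntegrable_iff]
  have hg : IntegrableOn (fun _ : ℝ => C) (Set.uIoc a b) volume :=
    integrableOn_const measure_Ioc_lt_top.ne
  refine hg.mono' hf.aestronglyMeasurable.restrict ?_
  filter_upwards with x
  simpa [Real.norm_eq_abs] using hb x

private lemma aux_cont (c r : ℝ) {f : ℝ → ℝ} (hf : Measurable f) {C : ℝ} (hb : ∀ z, |f z| ≤ C) :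
    Continuous (fun z => c * ∫ u in z - r..z + r, f u) := by
  have hF : Continuous (fun t => ∫ x in (0:ℝ)..t, f x) :=
    intervalIntegral.continuous_primitive (fun a b => aux_ii hf hb a b) 0
  have hrw : ∀ z : ℝ, (∫ u in z - r..z + r, f u)
      = (∫ x in (0:ℝ)..(z + r), f x) - ∫ x in (0:ℝ)..(z - r), f x := by
    intro z
    rw [intervalIntegral.integral_interval_sub_left (aux_ii hf hb 0 (z + r))
      (aux_ii hf hb 0 (z - r))]
  simp only [hrw]
  exact continuous_const.mul ((hF.comp (continuous_id.add continuous_const)).sub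
    (hF.comp (continuous_id.sub continuous_const)))

theorem stmt_8 (δ₀ : ℝ) (hδ : |δ₀| < 1)
    (G : ℝ → (ℝ → ℝ) → ℝ → ℝ)
    (hG : ∀ r f z, G r f z = δ₀ * (1 / (2 * r)) * ∫ u in z - r..z + r, f u)
    (ind : ℝ → ℝ) (hind : ∀ z, ind z = if 0 ≤ z then 1 else 0)
    (S : ℝ → ℝ → ℝ)
    (hS : ∀ r : ℝ, 0 < r → ∀ z, Filter.Tendsto
      (fun N => ∑ k ∈ Finset.range N, ((G r)^[k] ind) z) Filter.atTop (nhds (S r z))) :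
    (∀ r : ℝ, 0 < r → ∀ K : ℕ, ((K : ℝ) + 1) * r ≤ 1/2 →
      (1 / (2 * r)) * ∫ x in (-r)..r, (∑ k ∈ Finset.range (K + 1), ((G r)^[k] ind) x)
        = (1/2) * ∑ k ∈ Finset.range (K + 1), δ₀ ^ k) ∧
    Filter.Tendsto (fun r => (1 / (2 * r)) * ∫ x in (-r)..r, S r x)
      (nhdsWithin 0 (Set.Ioi 0)) (nhds (1 / (2 * (1 - δ₀)))) := by
  have hind_meas : Measurable ind := by
    have : ind = fun z => if 0 ≤ z then (1:ℝ) else 0 := funext hind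
    rw [this]
    exact Measurable.ite measurableSet_Ici measurable_const measurable_const
  have hind_bd : ∀ z, |ind z| ≤ 1 := by
    intro z; rw [hind]; split <;> norm_num
  -- main pointwise facts, for each fixed r > 0
  have key : ∀ r : ℝ, 0 < r → ∀ k : ℕ,
      Measurable ((G r)^[k] ind) ∧ (∀ z, |((G r)^[k] ind) z| ≤ |δ₀| ^ k) ∧
      (∀ z : ℝ, z ≠ 0 → ((G r)^[k] ind) z + ((G r)^[k] ind) (-z) = δ₀ ^ k) := by
    intro r hr k
    induction k with
    | zero =>
      refine ⟨hind_meas, by simpa using hind_bd, ?_⟩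
      intro z hz
      simp only [Function.iterate_zero, id_eq]
      rw [hind, hind]
      rcases lt_or_gt_of_ne hz with h | h
      · rw [if_neg (by linarith), if_pos (by linarith)]; norm_num
      · rw [if_pos (by linarith), if_neg (by linarith)]; norm_num
    | succ k ih =>
      obtain ⟨hm, hb, hsym⟩ := ih
      have hiter : ∀ z, ((G r)^[k+1] ind) z
          = δ₀ * (1 / (2 * r)) * ∫ u in z - r..z + r, ((G r)^[k] ind) u := by
        intro z
        rw [Function.iterate_succ_apply', hG]
      have hint : ∀ a b : ℝ, IntervalIntegrable ((G r)^[k] ind) volume a b :=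
        aux_ii hm hb
      have hmeas' : Measurable ((G r)^[k+1] ind) := by
        have : Continuous (fun z => δ₀ * (1 / (2 * r)) * ∫ u in z - r..z + r,
            ((G r)^[k] ind) u) := aux_cont _ r hm hb
        have heq : ((G r)^[k+1] ind) = fun z => δ₀ * (1 / (2 * r)) *
            ∫ u in z - r..z + r, ((G r)^[k] ind) u := funext hiter
        rw [heq]; exact this.measurable
      refine ⟨hmeas', ?_, ?_⟩
      · intro z
        rw [hiter]
        have h1 : ‖∫ u in z - r..z + r, ((G r)^[k] ind) u‖ ≤ |δ₀| ^ k * |(z + r) - (z - r)| :=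
          intervalIntegral.norm_integral_le_of_norm_le_const
            (fun x _ => by simpa [Real.norm_eq_abs] using hb x)
        have h2 : |(z + r) - (z - r)| = 2 * r := by
          rw [abs_of_pos (by linarith)]; ring
        rw [h2] at h1
        rw [abs_mul, abs_mul]
        rw [Real.norm_eq_abs] at h1
        have h3 : |1 / (2 * r)| = 1 / (2 * r) := abs_of_pos (by positivity)
        calc |δ₀| * |1 / (2 * r)| * |∫ u in z - r..z + r, ((G r)^[k] ind) u|
            ≤ |δ₀| * (1 / (2 * r)) * (|δ₀| ^ k * (2 * r)) := by
              rw [h3]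
              exact mul_le_mul_of_nonneg_left h1 (by positivity)
          _ = |δ₀| ^ (k + 1) := by field_simp; ring
      · intro z _
        rw [hiter, hiter]
        have hneg : (∫ u in (-z) - r..(-z) + r, ((G r)^[k] ind) u)
            = ∫ u in z - r..z + r, ((G r)^[k] ind) (-u) := by
          rw [intervalIntegral.integral_comp_neg (fun u => ((G r)^[k] ind) u)]
          congr 1 <;> ring
        have hae : ∀ᵐ x : ℝ, x ≠ 0 := by
          simp only [ae_iff, not_not]
          have : {x : ℝ | x = 0} = {0} := by ext x; simp
          rw [this]; exact Real.volume_singleton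
        have hsum : (∫ u in z - r..z + r, (((G r)^[k] ind) u + ((G r)^[k] ind) (-u)))
            = ∫ u in z - r..z + r, (δ₀ ^ k : ℝ) := by
          apply intervalIntegral.integral_congr_ae
          filter_upwards [hae] with u hu _
          exact hsym u hu
        have hintneg : ∀ a b : ℝ, IntervalIntegrable (fun u => ((G r)^[k] ind) (-u)) volume a b :=
          aux_ii (hm.comp measurable_neg) (fun z => hb (-z))
        have hadd : (∫ u in z - r..z + r, (((G r)^[k] ind) u + ((G r)^[k] ind) (-u)))
            = (∫ u in z - r..z + r, ((G r)^[k] ind) u)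
              + ∫ u in z - r..z + r, ((G r)^[k] ind) (-u) :=
          intervalIntegral.integral_add (hint _ _) (hintneg _ _)
        have hconst : (∫ u in z - r..z + r, (δ₀ ^ k : ℝ)) = 2 * r * δ₀ ^ k := by
          rw [intervalIntegral.integral_const, smul_eq_mul]; ring
        have : (∫ u in z - r..z + r, ((G r)^[k] ind) u)
            + (∫ u in z - r..z + r, ((G r)^[k] ind) (-u)) = 2 * r * δ₀ ^ k := by
          rw [← hadd, hsum, hconst]
        rw [hneg]
        calc δ₀ * (1 / (2 * r)) * (∫ u in z - r..z + r, ((G r)^[k] ind) u)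
              + δ₀ * (1 / (2 * r)) * ∫ u in z - r..z + r, ((G r)^[k] ind) (-u)
            = δ₀ * (1 / (2 * r)) * ((∫ u in z - r..z + r, ((G r)^[k] ind) u)
              + ∫ u in z - r..z + r, ((G r)^[k] ind) (-u)) := by ring
          _ = δ₀ ^ (k + 1) := by rw [this]; field_simp; ring
  -- integral of each iterate over [-r, r]
  have hker : ∀ r : ℝ, 0 < r → ∀ k : ℕ,
      (∫ x in (-r)..r, ((G r)^[k] ind) x) = r * δ₀ ^ k := by
    intro r hr k
    obtain ⟨hm, hb, hsym⟩ := key r hr k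
    have hrefl : (∫ x in (-r)..r, ((G r)^[k] ind) (-x)) = ∫ x in (-r)..r, ((G r)^[k] ind) x := by
      rw [intervalIntegral.integral_comp_neg (fun u => ((G r)^[k] ind) u)]
      norm_num
    have hae : ∀ᵐ x : ℝ, x ≠ 0 := by
      simp only [ae_iff, not_not]
      have : {x : ℝ | x = 0} = {0} := by ext x; simp
      rw [this]; exact Real.volume_singleton
    have hsum : (∫ x in (-r)..r, (((G r)^[k] ind) x + ((G r)^[k] ind) (-x)))
        = ∫ x in (-r)..r, (δ₀ ^ k : ℝ) := by
      apply intervalIntegral.integral_congr_ae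
      filter_upwards [hae] with u hu _
      exact hsym u hu
    have hadd : (∫ x in (-r)..r, (((G r)^[k] ind) x + ((G r)^[k] ind) (-x)))
        = (∫ x in (-r)..r, ((G r)^[k] ind) x) + ∫ x in (-r)..r, ((G r)^[k] ind) (-x) :=
      intervalIntegral.integral_add (aux_ii hm hb _ _)
        (aux_ii (hm.comp measurable_neg) (fun z => hb (-z)) _ _)
    have hconst : (∫ x in (-r)..r, (δ₀ ^ k : ℝ)) = 2 * r * δ₀ ^ k := by
      rw [intervalIntegral.integral_const, smul_eq_mul]; ring
    have h2 : 2 * (∫ x in (-r)..r, ((G r)^[k] ind) x) = 2 * r * δ₀ ^ k := by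
      rw [← hconst, ← hsum, hadd, hrefl]; ring
    linarith
  constructor
  · intro r hr K _
    have hsum : (∫ x in (-r)..r, (∑ k ∈ Finset.range (K + 1), ((G r)^[k] ind) x))
        = ∑ k ∈ Finset.range (K + 1), ∫ x in (-r)..r, ((G r)^[k] ind) x :=
      intervalIntegral.integral_finset_sum (fun k _ =>
        aux_ii (key r hr k).1 (key r hr k).2.1 _ _)
    rw [hsum]
    have : ∀ k ∈ Finset.range (K + 1), (∫ x in (-r)..r, ((G r)^[k] ind) x) = r * δ₀ ^ k :=
      fun k _ => hker r hr k
    rw [Finset.sum_congr rfl this, ← Finset.mul_sum]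
    have hr' : r ≠ 0 := ne_of_gt hr
    field_simp
  · -- the function is eventually constant, equal to 1/(2(1-δ₀))
    have hval : ∀ r : ℝ, 0 < r →
        (1 / (2 * r)) * (∫ x in (-r)..r, S r x) = 1 / (2 * (1 - δ₀)) := by
      intro r hr
      have hbd : (1 : ℝ) - |δ₀| > 0 := by linarith [abs_nonneg δ₀]
      -- DCT: partial sums converge to S r, dominated by constant
      have hdct : Filter.Tendsto
          (fun N => ∫ x in (-r)..r, (∑ k ∈ Finset.range N, ((G r)^[k] ind) x))
          Filter.atTop (nhds (∫ x in (-r)..r, S r x)) := by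
        apply intervalIntegral.tendsto_integral_filter_of_dominated_convergence
          (fun _ => (1 - |δ₀|)⁻¹)
        · filter_upwards with N
          exact (Finset.measurable_sum _ (fun k _ => (key r hr k).1)).aestronglyMeasurable.restrict
        · filter_upwards with N
          filter_upwards with x _
          rw [Real.norm_eq_abs]
          calc |∑ k ∈ Finset.range N, ((G r)^[k] ind) x|
              ≤ ∑ k ∈ Finset.range N, |((G r)^[k] ind) x| := Finset.abs_sum_le_sum_abs _ _
            _ ≤ ∑ k ∈ Finset.range N, |δ₀| ^ k :=
                Finset.sum_le_sum (fun k _ => (key r hr k).2.1 x)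
            _ ≤ ∑' k : ℕ, |δ₀| ^ k := Summable.sum_le_tsum _ (fun k _ => by positivity)
                (summable_geometric_of_lt_one (abs_nonneg _) hδ)
            _ = (1 - |δ₀|)⁻¹ := tsum_geometric_of_lt_one (abs_nonneg _) hδ
        · exact intervalIntegrable_const
        · filter_upwards with x _
          exact hS r hr x
      have hlim : Filter.Tendsto
          (fun N => ∫ x in (-r)..r, (∑ k ∈ Finset.range N, ((G r)^[k] ind) x))
          Filter.atTop (nhds (r * (1 - δ₀)⁻¹)) := by
        have heq : ∀ N, (∫ x in (-r)..r, (∑ k ∈ Finset.range N, ((G r)^[k] ind) x))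
            = r * ∑ k ∈ Finset.range N, δ₀ ^ k := by
          intro N
          rw [intervalIntegral.integral_finset_sum (fun k _ =>
            aux_ii (key r hr k).1 (key r hr k).2.1 _ _)]
          rw [Finset.sum_congr rfl (fun k _ => hker r hr k), ← Finset.mul_sum]
        simp only [heq]
        exact ((hasSum_geometric_of_abs_lt_one hδ).tendsto_sum_nat).const_mul r
      have hint : (∫ x in (-r)..r, S r x) = r * (1 - δ₀)⁻¹ :=
        tendsto_nhds_unique hdct hlim
      rw [hint]
      have hr' : r ≠ 0 := ne_of_gt hr
      have h1 : (1 : ℝ) - δ₀ ≠ 0 := by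
        have := abs_lt.mp hδ
        intro h; linarith [this.2]
      field_simp
    have heq : (fun _ : ℝ => 1 / (2 * (1 - δ₀))) =ᶠ[nhdsWithin 0 (Set.Ioi 0)]
        (fun r => (1 / (2 * r)) * ∫ x in (-r)..r, S r x) := by
      filter_upwards [self_mem_nhdsWithin] with r hr
      exact (hval r hr).symm
    exact Filter.Tendsto.congr' heq tendsto_const_nhds
end

section
/- Identity linking total and direct effects in the small-radius regime: in the linear-in-means model, the total treatment effect τ_TOT = m⁺(0) − m⁻(0) + δ(0)(μ_𝜄(0) − μ_𝟘(0)) + γ(0) satisfies, as r → 0, τ_TOT → (τ_d + γ(0))/(1−δ(0)), where τ_d = m⁺(0) − m⁻(0). Equivalently, when everyone is treated the equilibrium outcome is Y_𝜄 = (I−G)^{-1}(m⁺ + γ) and when no one is treated Y_𝟘 = (I−G)^{-1} m⁻, and the window averages μ_𝜄(0), μ_𝟘(0) converge to (m⁺(0)+γ(0))/(1−δ(0)) and m⁻(0)/(1−δ(0)) respectively. -/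
open MeasureTheory Set Filter



private lemma lip_of_deriv (f f' : ℝ → ℝ) (Cf : ℝ) (hderiv : ∀ z, HasDerivAt f (f' z) z)
    (hbound : ∀ z, |f' z| ≤ Cf) : ∀ x y, |f x - f y| ≤ Cf * |x - y| := by
  intro x y
  have := Convex.norm_image_sub_le_of_norm_hasDerivWithin_le
    (f := f) (f' := f') (s := Set.univ) (C := Cf)
    (fun z _ => (hderiv z).hasDerivWithinAt) (fun z _ => hbound z)
    convex_univ (Set.mem_univ y) (Set.mem_univ x)
  simpa [Real.norm_eq_abs] using this

private lemma cont_of_lip (f : ℝ → ℝ) (Cf : ℝ) (h : ∀ x y, |f x - f y| ≤ Cf * |x - y|) :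
    Continuous f := by
  have hC : 0 ≤ Cf := by
    have := h 1 0
    simp at this
    nlinarith [abs_nonneg (f 1 - f 0)]
  have : LipschitzWith (Real.toNNReal Cf) f := by
    apply LipschitzWith.of_dist_le_mul
    intro x y
    rw [Real.dist_eq, Real.dist_eq, Real.coe_toNNReal _ hC]
    exact h x y
  exact this.continuous

private lemma arith0 {v C K₁ K₂ r X : ℝ} (h1 : v ≤ C*X) (h2 : C ≤ K₂) (hK₁ : 0 ≤ K₁)
    (hK₂ : 0 ≤ K₂) (hr : 0 ≤ r) (hX : 0 ≤ X) : v ≤ (K₁*r + K₂*X)*(1+X) := by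
  nlinarith [mul_nonneg hK₁ hr, mul_nonneg (mul_nonneg hK₁ hr) hX,
    mul_nonneg (mul_nonneg hK₂ hX) hX, mul_le_mul_of_nonneg_right h2 hX]

private lemma arith1 {D C MM X : ℝ} (hD : 0 ≤ D) (hC : 0 ≤ C) (hMM : 1 ≤ MM) (hX : 0 ≤ X) :
    D + C*X + C*MM ≤ (D+C+C*MM)*(1+X) := by
  nlinarith [mul_nonneg hD hX, mul_nonneg (mul_nonneg hC (by linarith : (0:ℝ) ≤ MM)) hX]

private lemma arith2 {θ σ K₁ K₂ r X : ℝ} (h : θ*(K₁+K₂) ≤ σ*K₁) (hθσ : θ ≤ σ)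
    (hK₂ : 0 ≤ K₂) (hr : 0 ≤ r) (hX : 0 ≤ X) :
    θ*(K₁*r + K₂*(X+r)) ≤ σ*(K₁*r + K₂*X) := by
  nlinarith [mul_le_mul_of_nonneg_right h hr,
    mul_nonneg (mul_nonneg (by linarith : (0:ℝ) ≤ σ - θ) hK₂) hX]

private lemma arith3 {r X : ℝ} (hr : 0 ≤ r) (hX : 0 ≤ X) : 1+(X+r) ≤ (1+r)*(1+X) := by
  nlinarith [mul_nonneg hr hX]

private lemma arith4 {σ d K₁ K₂ r X : ℝ} (hσ : σ ≤ 1) (hd : 0 ≤ d) (hX : 0 ≤ X)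
    (hK₁r : 0 ≤ K₁*r) :
    (1-σ)*K₂*(d*(X*(1+X))) ≤ (1-σ)*(d*((K₁*r + K₂*X)*(1+X))) := by
  nlinarith [mul_nonneg (mul_nonneg (mul_nonneg (by linarith : (0:ℝ) ≤ 1-σ) hd)
    (by linarith : (0:ℝ) ≤ 1+X)) hK₁r]

private lemma arith5 {K r : ℝ} (hK : 0 ≤ K) (hr : 0 ≤ r) (hr1 : r ≤ 1) :
    (K*r)*(1+r) ≤ 2*K*r := by
  nlinarith [mul_nonneg (mul_nonneg hK hr) (by linarith : (0:ℝ) ≤ 1 - r)]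

set_option maxHeartbeats 4000000 in
lemma key_tendsto (C Cδ δbar : ℝ) (hδbar0 : 0 ≤ δbar) (hδbar1 : δbar < 1)
    (f δ : ℝ → ℝ) (hf : ∀ x y, |f x - f y| ≤ C * |x - y|) (hfc : Continuous f)
    (hδlip : ∀ x y, |δ x - δ y| ≤ Cδ * |x - y|) (hδc : Continuous δ)
    (hδb : ∀ z, |δ z| ≤ δbar)
    (G : ℝ → (ℝ → ℝ) → ℝ → ℝ)
    (hG : ∀ r g z, G r g z = δ z * (1 / (2 * r)) * ∫ u in z - r..z + r, g u)
    (Y : ℝ → ℝ → ℝ)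
    (hY : ∀ r : ℝ, 0 < r → ∀ z, Tendsto
      (fun N => ∑ k ∈ Finset.range N, ((G r)^[k] f) z) atTop (nhds (Y r z)))
    (μ : ℝ → ℝ) (hμ : ∀ r, μ r = (1 / (2 * r)) * ∫ z in (-r)..r, Y r z) :
    Tendsto μ (nhdsWithin 0 (Set.Ioi 0)) (nhds (f 0 / (1 - δ 0))) := by
  have hC : 0 ≤ C := by
    have := hf 1 0; simp at this; nlinarith [abs_nonneg (f 1 - f 0)]
  have hCδ : 0 ≤ Cδ := by
    have := hδlip 1 0; simp at this; nlinarith [abs_nonneg (δ 1 - δ 0)]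
  -- constants
  obtain ⟨D, hD⟩ : ∃ D : ℝ, D = |f 0| := ⟨_, rfl⟩
  have hD0 : 0 ≤ D := hD ▸ abs_nonneg _
  obtain ⟨δ₁, hδ₁def⟩ : ∃ x : ℝ, x = max δbar (1/2) := ⟨_, rfl⟩
  have hδ₁l : (1/2 : ℝ) ≤ δ₁ := hδ₁def ▸ le_max_right _ _
  have hδ₁b : δbar ≤ δ₁ := hδ₁def ▸ le_max_left _ _
  have hδ₁1 : δ₁ < 1 := by rw [hδ₁def]; exact max_lt hδbar1 (by norm_num)
  have hδ₁0 : 0 < δ₁ := lt_of_lt_of_le (by norm_num) hδ₁l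
  obtain ⟨δ₁', hδ₁'def⟩ : ∃ x : ℝ, x = (1 + δ₁)/2 := ⟨_, rfl⟩
  have hδ₁'0 : 0 < δ₁' := by rw [hδ₁'def]; linarith
  have hδ₁lt : δ₁ < δ₁' := by rw [hδ₁'def]; linarith
  have hδ₁'1 : δ₁' < 1 := by rw [hδ₁'def]; linarith
  obtain ⟨θ, hθdef⟩ : ∃ x : ℝ, x = δ₁ / δ₁' := ⟨_, rfl⟩
  have hθδ : θ * δ₁' = δ₁ := by rw [hθdef]; field_simp
  have hθ0 : 0 < θ := hθdef ▸ div_pos hδ₁0 hδ₁'0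
  have hθ1 : θ < 1 := hθdef ▸ (div_lt_one hδ₁'0).mpr hδ₁lt
  obtain ⟨σ, hσdef⟩ : ∃ x : ℝ, x = (1 + θ)/2 := ⟨_, rfl⟩
  have hσθ : θ < σ := by rw [hσdef]; linarith
  have hσ1 : σ < 1 := by rw [hσdef]; linarith
  have hσ0 : 0 < σ := by rw [hσdef]; linarith
  obtain ⟨MM, hMMdef⟩ : ∃ x : ℝ, x = θ/(1-θ)^2 + 1/(1-θ) := ⟨_, rfl⟩
  have hMM1 : 1 ≤ MM := by
    rw [hMMdef]
    have h1 : (1:ℝ) ≤ 1/(1-θ) := by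
      rw [le_div_iff₀ (by linarith)]; linarith
    have h2 : 0 ≤ θ/(1-θ)^2 := by positivity
    linarith
  have hMM : ∀ k : ℕ, (k + 1 : ℝ) * θ^k ≤ MM := by
    intro k
    have hθn : ‖θ‖ < 1 := by rw [Real.norm_eq_abs, abs_of_pos hθ0]; exact hθ1
    have h1 : (k : ℝ) * θ^k ≤ θ/(1-θ)^2 :=
      le_hasSum (hasSum_coe_mul_geometric_of_norm_lt_one (𝕜 := ℝ) hθn) k
        (fun j _ => by positivity)
    have h2 : θ^k ≤ (1-θ)⁻¹ :=
      le_hasSum (hasSum_geometric_of_norm_lt_one (ξ := θ) hθn) k (fun j _ => by positivity)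
    rw [hMMdef, one_div]
    nlinarith
  obtain ⟨K₂', hK₂'def⟩ : ∃ x : ℝ, x = Cδ * (D + C + C * MM) / δ₁' := ⟨_, rfl⟩
  have hK₂'0 : 0 ≤ K₂' := by
    rw [hK₂'def]
    apply div_nonneg _ hδ₁'0.le
    apply mul_nonneg hCδ
    nlinarith
  have hK₂'eq : K₂' * δ₁' = Cδ * (D + C + C * MM) := by
    rw [hK₂'def]; field_simp
  obtain ⟨K₂, hK₂def⟩ : ∃ x : ℝ, x = C + 2 * K₂' / (1 - θ) := ⟨_, rfl⟩
  have haux2 : 0 ≤ 2 * K₂' / (1-θ) := by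
    apply div_nonneg (by linarith) (by linarith)
  have hK₂0 : 0 ≤ K₂ := by rw [hK₂def]; linarith
  have hK₂C : C ≤ K₂ := by rw [hK₂def]; linarith
  have hK₂' : K₂' ≤ (1 - σ) * K₂ := by
    have h2 : 2 * K₂' / (1-θ) ≤ K₂ := by rw [hK₂def]; linarith
    rw [div_le_iff₀ (by linarith : (0:ℝ) < 1 - θ)] at h2
    rw [hσdef]
    linarith
  obtain ⟨K₁, hK₁def⟩ : ∃ x : ℝ, x = C + 2 * θ * K₂ / (1 - θ) := ⟨_, rfl⟩
  have haux1 : 0 ≤ 2 * θ * K₂ / (1-θ) := by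
    exact div_nonneg (mul_nonneg (by linarith) hK₂0) (by linarith)
  have hK₁0 : 0 ≤ K₁ := by rw [hK₁def]; linarith
  have hK₁abs : θ * (K₁ + K₂) ≤ σ * K₁ := by
    have h2 : 2 * θ * K₂ / (1-θ) ≤ K₁ := by rw [hK₁def]; linarith
    rw [div_le_iff₀ (by linarith : (0:ℝ) < 1 - θ)] at h2
    rw [hσdef]
    linarith
  obtain ⟨δ₃, hδ₃def⟩ : ∃ x : ℝ, x = (1 + δ₁')/2 := ⟨_, rfl⟩
  have hδ₃1 : δ₃ < 1 := by rw [hδ₃def]; linarith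
  have hδ₃l : δ₁' < δ₃ := by rw [hδ₃def]; linarith
  have hδ₃0 : 0 < δ₃ := by rw [hδ₃def]; linarith
  obtain ⟨r₀, hr₀def⟩ : ∃ x : ℝ, x = min 1 ((1 - δ₁')/(2*δ₁')) := ⟨_, rfl⟩
  have hr₀0 : 0 < r₀ := by
    rw [hr₀def]
    apply lt_min one_pos
    apply div_pos (by linarith) (by linarith)
  obtain ⟨c, hcdef⟩ : ∃ x : ℝ, x = f 0 / (1 - δ 0) := ⟨_, rfl⟩
  obtain ⟨K₃, hK₃def⟩ : ∃ x : ℝ, x = 2 * (K₁ + K₂) / (1 - δ₃) := ⟨_, rfl⟩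
  have hK₃0 : 0 ≤ K₃ := by
    rw [hK₃def]; apply div_nonneg (by linarith) (by linarith)
  -- main estimate for fixed r
  have main : ∀ r : ℝ, 0 < r → r ≤ r₀ → |μ r - c| ≤ K₃ * r := by
    intro r hr hrr₀
    have hr1 : r ≤ 1 := hrr₀.trans (hr₀def ▸ min_le_left _ _)
    have h2r : (0:ℝ) < 2 * r := by linarith
    obtain ⟨δ₂, hδ₂def⟩ : ∃ x : ℝ, x = δ₁' * (1 + r) := ⟨_, rfl⟩
    have hδ₂l : δ₁' ≤ δ₂ := by
      rw [hδ₂def]; linarith [mul_nonneg hδ₁'0.le hr.le]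
    have hδ₂0 : 0 < δ₂ := lt_of_lt_of_le hδ₁'0 hδ₂l
    have hδ₂3 : δ₂ ≤ δ₃ := by
      have h : r ≤ (1 - δ₁')/(2*δ₁') := hrr₀.trans (hr₀def ▸ min_le_right _ _)
      rw [le_div_iff₀ (by linarith : (0:ℝ) < 2*δ₁')] at h
      rw [hδ₂def, hδ₃def]
      linarith
    have hδ₂1 : δ₂ < 1 := lt_of_le_of_lt hδ₂3 hδ₃1
    -- continuity of iterates
    have cont : ∀ k : ℕ, Continuous ((G r)^[k] f) := by
      intro k
      induction k with
      | zero => simpa using hfc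
      | succ k ih =>
        have hrw : (G r)^[k+1] f = fun z => δ z * (1 / (2 * r)) *
            ((∫ u in (0:ℝ)..(z + r), (G r)^[k] f u) - ∫ u in (0:ℝ)..(z - r), (G r)^[k] f u) := by
          funext z
          rw [Function.iterate_succ_apply', hG]
          congr 1
          rw [← intervalIntegral.integral_add_adjacent_intervals
            (ih.intervalIntegrable 0 (z - r)) (ih.intervalIntegrable (z - r) (z + r))]
          ring
        rw [hrw]
        have hprim : Continuous fun b => ∫ u in (0:ℝ)..b, (G r)^[k] f u :=
          intervalIntegral.continuous_primitive (fun a b => ih.intervalIntegrable a b) 0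
        exact (hδc.mul continuous_const).mul
          ((hprim.comp (continuous_id.add continuous_const)).sub
           (hprim.comp (continuous_id.sub continuous_const)))
    -- Lemma A: size bound
    have boundA : ∀ (k : ℕ) (z : ℝ), |(G r)^[k] f z| ≤ δbar^k * (D + C * (|z| + k * r)) := by
      intro k
      induction k with
      | zero =>
        intro z
        have h1 := hf z 0
        simp only [sub_zero] at h1
        have h2 : |f z| ≤ |f z - f 0| + |f 0| := by
          calc |f z| = |(f z - f 0) + f 0| := by ring_nf
            _ ≤ |f z - f 0| + |f 0| := abs_add_le _ _
        simp only [Function.iterate_zero_apply, pow_zero, Nat.cast_zero, zero_mul, add_zero,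
          one_mul]
        rw [← hD] at h2
        linarith
      | succ k ih =>
        intro z
        rw [Function.iterate_succ_apply', hG]
        obtain ⟨B, hB⟩ : ∃ x : ℝ, x = δbar^k * (D + C * (|z| + r + k * r)) := ⟨_, rfl⟩
        have hkr0 : (0:ℝ) ≤ k * r := by positivity
        have hδp : (0:ℝ) ≤ δbar ^ k := pow_nonneg hδbar0 k
        have hzr0 : (0:ℝ) ≤ |z| + r + k * r := by
          have := abs_nonneg z; linarith
        have hB0 : 0 ≤ B := by
          rw [hB]
          exact mul_nonneg hδp (by linarith [mul_nonneg hC hzr0])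
        have hIb : ‖∫ u in z - r..z + r, (G r)^[k] f u‖ ≤ B * |(z + r) - (z - r)| := by
          apply intervalIntegral.norm_integral_le_of_norm_le_const
          intro u hu
          rw [Set.uIoc_of_le (by linarith : z - r ≤ z + r)] at hu
          have hub : |u| ≤ |z| + r := by
            have h1 := hu.1.le; have h2 := hu.2
            have h3 := neg_abs_le z; have h4 := le_abs_self z
            rw [abs_le]; constructor <;> linarith
          rw [Real.norm_eq_abs]
          calc |(G r)^[k] f u| ≤ δbar^k * (D + C * (|u| + k * r)) := ih u
            _ ≤ B := by
                rw [hB]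
                apply mul_le_mul_of_nonneg_left _ hδp
                have : C * (|u| + k*r) ≤ C * (|z| + r + k*r) :=
                  mul_le_mul_of_nonneg_left (by linarith) hC
                linarith
        have h2 : |(z + r) - (z - r)| = 2 * r := by
          rw [abs_of_pos (by linarith : (0:ℝ) < (z+r) - (z-r))]; ring
        rw [h2, Real.norm_eq_abs] at hIb
        calc |δ z * (1 / (2 * r)) * ∫ u in z - r..z + r, (G r)^[k] f u|
            = |δ z| * ((1 / (2 * r)) * |∫ u in z - r..z + r, (G r)^[k] f u|) := by
              rw [abs_mul, abs_mul, abs_of_pos (by positivity : (0:ℝ) < 1/(2*r)), mul_assoc]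
          _ ≤ δbar * ((1 / (2 * r)) * (B * (2*r))) := by
              apply mul_le_mul (hδb z) _ (by positivity) hδbar0
              apply mul_le_mul_of_nonneg_left hIb (by positivity)
          _ = δbar * B := by field_simp
          _ = δbar^(k+1) * (D + C * (|z| + (k+1 : ℕ) * r)) := by
              rw [hB]; push_cast; ring
    -- pow facts
    have hδbδ₁' : δbar ≤ δ₁' := hδ₁b.trans hδ₁lt.le
    have powbars : ∀ k : ℕ, δbar^k ≤ δ₁'^k := fun k => pow_le_pow_left₀ hδbar0 hδbδ₁' k
    have pow12 : ∀ k : ℕ, δ₁'^k ≤ δ₂^k := fun k => pow_le_pow_left₀ hδ₁'0.le hδ₂l k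
    have powpos1' : ∀ k : ℕ, (0:ℝ) < δ₁'^k := fun k => pow_pos hδ₁'0 k
    have powpos2 : ∀ k : ℕ, (0:ℝ) < δ₂^k := fun k => pow_pos hδ₂0 k
    have powMM : ∀ k : ℕ, (k+1:ℝ) * δbar^k ≤ MM * δ₁'^k := by
      intro k
      have h1 : δbar^k ≤ θ^k * δ₁'^k := by
        rw [← mul_pow]
        exact pow_le_pow_left₀ hδbar0 (by rw [hθδ]; exact hδ₁b) k
      calc (k+1:ℝ)*δbar^k ≤ (k+1:ℝ)*(θ^k*δ₁'^k) := by
            apply mul_le_mul_of_nonneg_left h1 (by positivity)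
        _ = ((k+1:ℝ)*θ^k)*δ₁'^k := by ring
        _ ≤ MM*δ₁'^k := mul_le_mul_of_nonneg_right (hMM k) (powpos1' k).le
    -- Lemma B : closeness to the geometric approximation
    have boundB : ∀ (k : ℕ) (z : ℝ),
        |(G r)^[k] f z - (δ 0)^k * f 0| ≤ δ₂^k * ((K₁*r + K₂*|z|) * (1+|z|)) := by
      intro k
      induction k with
      | zero =>
        intro z
        simp only [Function.iterate_zero_apply, pow_zero, one_mul]
        have h1 := hf z 0
        simp only [sub_zero] at h1
        have h2 : C*|z| ≤ K₂*|z| := mul_le_mul_of_nonneg_right hK₂C (abs_nonneg z)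
        have h3 : 0 ≤ K₁*r := mul_nonneg hK₁0 hr.le
        exact arith0 h1 hK₂C hK₁0 hK₂0 hr.le (abs_nonneg z)
      | succ k ih =>
        intro z
        rw [Function.iterate_succ_apply', hG]
        obtain ⟨I, hI⟩ : ∃ x:ℝ, x = ∫ u in z - r..z + r, (G r)^[k] f u := ⟨_, rfl⟩
        obtain ⟨A, hA⟩ : ∃ x:ℝ, x = (1/(2*r)) * I := ⟨_, rfl⟩
        obtain ⟨T, hT⟩ : ∃ x:ℝ, x = (δ 0)^k * f 0 := ⟨_, rfl⟩
        have h2rabs : |(z + r) - (z - r)| = 2 * r := by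
          rw [abs_of_pos (by linarith : (0:ℝ) < (z+r) - (z-r))]; ring
        have hzr0 : (0:ℝ) ≤ |z| + r + k * r := by positivity
        have hδp : (0:ℝ) ≤ δbar ^ k := pow_nonneg hδbar0 k
        -- bound on |A|
        have hIb : |I| ≤ (δbar^k * (D + C*(|z| + r + k*r))) * (2*r) := by
          rw [hI]
          rw [← Real.norm_eq_abs, ← h2rabs]
          apply intervalIntegral.norm_integral_le_of_norm_le_const
          intro u hu
          rw [Set.uIoc_of_le (by linarith : z - r ≤ z + r)] at hu
          have hub : |u| ≤ |z| + r := by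
            have h1 := hu.1.le; have h2 := hu.2
            have h3 := neg_abs_le z; have h4 := le_abs_self z
            rw [abs_le]; constructor <;> linarith
          rw [Real.norm_eq_abs]
          calc |(G r)^[k] f u| ≤ δbar^k * (D + C * (|u| + k * r)) := boundA k u
            _ ≤ δbar^k * (D + C*(|z| + r + k*r)) := by
                apply mul_le_mul_of_nonneg_left _ hδp
                have : C * (|u| + k*r) ≤ C * (|z| + r + k*r) :=
                  mul_le_mul_of_nonneg_left (by linarith) hC
                linarith
        have hAbound : |A| ≤ δbar^k * (D + C*(|z| + r + k*r)) := by
          rw [hA, abs_mul, abs_of_pos (show (0:ℝ) < 1/(2*r) by positivity)]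
          calc 1/(2*r) * |I| ≤ 1/(2*r) * ((δbar^k * (D + C*(|z|+r+k*r))) * (2*r)) :=
                mul_le_mul_of_nonneg_left hIb (by positivity)
            _ = δbar^k * (D + C*(|z|+r+k*r)) := by field_simp
        -- bound on |A - T|
        have hgi : IntervalIntegrable ((G r)^[k] f) MeasureTheory.volume (z-r) (z+r) :=
          (cont k).intervalIntegrable _ _
        have hsub : A - T = (1/(2*r)) * ∫ u in z - r..z + r, ((G r)^[k] f u - T) := by
          rw [intervalIntegral.integral_sub hgi intervalIntegrable_const,
              intervalIntegral.integral_const, hA, hI, smul_eq_mul]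
          have he : (z + r - (z - r)) = 2*r := by ring
          rw [he]
          field_simp
        have hATb : |A - T| ≤ δ₂^k * ((K₁*r + K₂*(|z|+r)) * (1+(|z|+r))) := by
          rw [hsub, abs_mul, abs_of_pos (show (0:ℝ) < 1/(2*r) by positivity)]
          have hIb2 : |∫ u in z - r..z + r, ((G r)^[k] f u - T)| ≤
              (δ₂^k * ((K₁*r + K₂*(|z|+r)) * (1+(|z|+r)))) * (2*r) := by
            rw [← Real.norm_eq_abs, ← h2rabs]
            apply intervalIntegral.norm_integral_le_of_norm_le_const
            intro u hu
            rw [Set.uIoc_of_le (by linarith : z - r ≤ z + r)] at hu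
            have hub : |u| ≤ |z| + r := by
              have h1 := hu.1.le; have h2 := hu.2
              have h3 := neg_abs_le z; have h4 := le_abs_self z
              rw [abs_le]; constructor <;> linarith
            rw [Real.norm_eq_abs]
            calc |(G r)^[k] f u - T| ≤ δ₂^k * ((K₁*r + K₂*|u|) * (1+|u|)) := hT ▸ ih u
              _ ≤ δ₂^k * ((K₁*r + K₂*(|z|+r)) * (1+(|z|+r))) := by
                  apply mul_le_mul_of_nonneg_left _ (powpos2 k).le
                  have e1 : K₁*r + K₂*|u| ≤ K₁*r + K₂*(|z|+r) := by
                    have := mul_le_mul_of_nonneg_left hub hK₂0; linarith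
                  have e2 : 1+|u| ≤ 1+(|z|+r) := by linarith
                  have e3 : 0 ≤ 1 + |u| := by linarith [abs_nonneg u]
                  have e4 : 0 ≤ K₁*r + K₂*(|z|+r) := by
                    have := mul_nonneg hK₁0 hr.le
                    have : 0 ≤ K₂*(|z|+r) :=
                      mul_nonneg hK₂0 (by linarith [abs_nonneg z])
                    linarith [mul_nonneg hK₁0 hr.le]
                  exact mul_le_mul e1 e2 e3 e4
          calc 1/(2*r) * |∫ u in z - r..z + r, ((G r)^[k] f u - T)|
              ≤ 1/(2*r) * ((δ₂^k * ((K₁*r + K₂*(|z|+r)) * (1+(|z|+r)))) * (2*r)) :=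
                mul_le_mul_of_nonneg_left hIb2 (by positivity)
            _ = δ₂^k * ((K₁*r + K₂*(|z|+r)) * (1+(|z|+r))) := by field_simp
        -- decomposition
        have hdecomp : δ z * (1/(2*r)) * I - (δ 0)^(k+1) * f 0
            = (δ z - δ 0) * A + δ 0 * (A - T) := by
          rw [hA, hT]; ring
        have habs : |δ z * (1/(2*r)) * I - (δ 0)^(k+1) * f 0|
            ≤ Cδ*|z| * |A| + δbar * |A - T| := by
          rw [hdecomp]
          have h1 : |δ z - δ 0| ≤ Cδ * |z| := by simpa using hδlip z 0
          calc |(δ z - δ 0) * A + δ 0 * (A - T)|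
              ≤ |(δ z - δ 0)*A| + |δ 0 * (A-T)| := abs_add_le _ _
            _ = |δ z - δ 0| * |A| + |δ 0| * |A - T| := by rw [abs_mul, abs_mul]
            _ ≤ Cδ*|z| * |A| + δbar * |A - T| :=
                add_le_add (mul_le_mul_of_nonneg_right h1 (abs_nonneg A))
                  (mul_le_mul_of_nonneg_right (hδb 0) (abs_nonneg _))
        -- Term 1 estimate
        have hT1 : Cδ*|z| * |A| ≤ (1-σ)*K₂ * (δ₂^(k+1) * (|z| * (1+|z|))) := by
          have hCMM : (0:ℝ) ≤ C*MM := mul_nonneg hC (by linarith)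
          have hA2 : |A| ≤ δ₁'^k * (D + C*|z| + C*MM) := by
            calc |A| ≤ δbar^k * (D + C * (|z| + r + k*r)) := hAbound
              _ = δbar^k * (D + C*|z|) + C*((k+1:ℝ)*δbar^k)*r := by push_cast; ring
              _ ≤ δ₁'^k * (D + C*|z|) + C*(MM*δ₁'^k)*1 := by
                  have e1 : δbar^k * (D+C*|z|) ≤ δ₁'^k * (D+C*|z|) :=
                    mul_le_mul_of_nonneg_right (powbars k)
                      (by linarith [mul_nonneg hC (abs_nonneg z)])
                  have e0 : 0 ≤ C*((k+1:ℝ)*δbar^k) :=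
                    mul_nonneg hC (mul_nonneg (by positivity) hδp)
                  have e2 : C*((k+1:ℝ)*δbar^k)*r ≤ C*(MM*δ₁'^k)*1 := by
                    apply mul_le_mul (mul_le_mul_of_nonneg_left (powMM k) hC) hr1 hr.le
                    exact mul_nonneg hC (mul_nonneg (by linarith) (powpos1' k).le)
                  linarith
              _ = δ₁'^k * (D + C*|z| + C*MM) := by ring
          have hmono : D + C*|z| + C*MM ≤ (D + C + C*MM)*(1+|z|) :=
            arith1 hD0 hC hMM1 (abs_nonneg z)
          have hz10 : (0:ℝ) ≤ |z| * (1+|z|) :=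
            mul_nonneg (abs_nonneg z) (by linarith [abs_nonneg z])
          calc Cδ*|z| * |A| ≤ Cδ*|z| * (δ₁'^k * ((D + C + C*MM)*(1+|z|))) := by
                apply mul_le_mul_of_nonneg_left _ (mul_nonneg hCδ (abs_nonneg z))
                calc |A| ≤ δ₁'^k * (D + C*|z| + C*MM) := hA2
                  _ ≤ δ₁'^k * ((D+C+C*MM)*(1+|z|)) :=
                      mul_le_mul_of_nonneg_left hmono (powpos1' k).le
            _ = (Cδ*(D+C+C*MM)) * (δ₁'^k * (|z| * (1+|z|))) := by ring
            _ = K₂' * (δ₁'^(k+1) * (|z| * (1+|z|))) := by rw [← hK₂'eq]; ring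
            _ ≤ ((1-σ)*K₂) * (δ₂^(k+1) * (|z| * (1+|z|))) := by
                apply mul_le_mul hK₂' _ _ (mul_nonneg (by linarith) hK₂0)
                · exact mul_le_mul_of_nonneg_right
                    (pow_le_pow_left₀ hδ₁'0.le hδ₂l (k+1)) hz10
                · exact mul_nonneg (powpos1' (k+1)).le hz10
        -- Term 2 estimate
        have hT2 : δbar * (δ₂^k * ((K₁*r + K₂*(|z|+r)) * (1+(|z|+r))))
            ≤ σ * (δ₂^(k+1) * ((K₁*r + K₂*|z|) * (1+|z|))) := by
          have hθmul : θ * (K₁*r + K₂*(|z|+r)) ≤ σ * (K₁*r + K₂*|z|) :=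
            arith2 hK₁abs hσθ.le hK₂0 hr.le (abs_nonneg z)
          have hzfac : 1+(|z|+r) ≤ (1+r)*(1+|z|) := arith3 hr.le (abs_nonneg z)
          have hP2 : 0 ≤ K₁*r + K₂*(|z|+r) := by
            have := mul_nonneg hK₁0 hr.le
            have := mul_nonneg hK₂0 (by linarith [abs_nonneg z] : (0:ℝ) ≤ |z|+r)
            linarith
          have hQ2 : (0:ℝ) ≤ 1+(|z|+r) := by linarith [abs_nonneg z]
          have hP1 : 0 ≤ K₁*r + K₂*|z| := by
            have := mul_nonneg hK₁0 hr.le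
            have := mul_nonneg hK₂0 (abs_nonneg z)
            linarith
          have hX1 : (0:ℝ) ≤ 1+|z| := by linarith [abs_nonneg z]
          have step1 : δbar * ((K₁*r + K₂*(|z|+r)) * (1+(|z|+r)))
              ≤ (θ*δ₁') * ((K₁*r + K₂*(|z|+r)) * (1+(|z|+r))) :=
            mul_le_mul_of_nonneg_right (by rw [hθδ]; exact hδ₁b)
              (mul_nonneg hP2 hQ2)
          have step2 : (θ*(K₁*r + K₂*(|z|+r))) * (1+(|z|+r))
              ≤ (σ*(K₁*r + K₂*|z|)) * ((1+r)*(1+|z|)) := by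
            apply mul_le_mul hθmul hzfac hQ2
            exact mul_nonneg hσ0.le hP1
          calc δbar * (δ₂^k * ((K₁*r + K₂*(|z|+r)) * (1+(|z|+r))))
              = δ₂^k * (δbar * ((K₁*r + K₂*(|z|+r)) * (1+(|z|+r)))) := by ring
            _ ≤ δ₂^k * ((θ*δ₁') * ((K₁*r + K₂*(|z|+r)) * (1+(|z|+r)))) :=
                mul_le_mul_of_nonneg_left step1 (powpos2 k).le
            _ = δ₂^k * δ₁' * ((θ*(K₁*r + K₂*(|z|+r))) * (1+(|z|+r))) := by ring
            _ ≤ δ₂^k * δ₁' * ((σ*(K₁*r + K₂*|z|)) * ((1+r)*(1+|z|))) := by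
                apply mul_le_mul_of_nonneg_left step2
                exact mul_nonneg (powpos2 k).le hδ₁'0.le
            _ = σ * ((δ₂^k * (δ₁'*(1+r))) * ((K₁*r + K₂*|z|) * (1+|z|))) := by ring
            _ = σ * (δ₂^(k+1) * ((K₁*r + K₂*|z|) * (1+|z|))) := by
                rw [← hδ₂def]; ring
        -- combine
        have hP1 : 0 ≤ K₁*r + K₂*|z| := by
          have := mul_nonneg hK₁0 hr.le
          have := mul_nonneg hK₂0 (abs_nonneg z)
          linarith
        have hfin : Cδ*|z| * |A| + δbar * |A - T| ≤ δ₂^(k+1) * ((K₁*r + K₂*|z|) * (1+|z|)) := by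
          have t2 : δbar * |A - T| ≤ σ * (δ₂^(k+1) * ((K₁*r + K₂*|z|)*(1+|z|))) :=
            le_trans (mul_le_mul_of_nonneg_left hATb hδbar0) hT2
          have e : (1-σ)*K₂*(δ₂^(k+1)*(|z| * (1+|z|)))
              ≤ (1-σ) * (δ₂^(k+1) * ((K₁*r+K₂*|z|)*(1+|z|))) :=
            arith4 hσ1.le (powpos2 (k+1)).le (abs_nonneg z) (mul_nonneg hK₁0 hr.le)
          have t1 := le_trans hT1 e
          linarith
        rw [← hI]
        exact le_trans habs hfin
    -- geometric sum bound
    have hgeo : ∀ N : ℕ, ∑ k ∈ Finset.range N, δ₂^k ≤ 1/(1-δ₃) := by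
      intro N
      induction N with
      | zero =>
        simp only [Finset.range_zero, Finset.sum_empty]
        exact div_nonneg zero_le_one (by linarith)
      | succ N ih =>
        rw [geom_sum_succ]
        have h1 : δ₂ * ∑ k ∈ Finset.range N, δ₂^k ≤ δ₂ * (1/(1-δ₃)) :=
          mul_le_mul_of_nonneg_left ih hδ₂0.le
        have hne : (1:ℝ) - δ₃ ≠ 0 := by linarith
        have h2 : δ₂ * (1/(1-δ₃)) ≤ δ₃ * (1/(1-δ₃)) :=
          mul_le_mul_of_nonneg_right hδ₂3 (div_nonneg zero_le_one (by linarith))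
        have heq : δ₃ * (1/(1-δ₃)) + 1 = 1/(1-δ₃) := by
          field_simp
          ring
        linarith
    -- uniform bound on partial sum differences, for |z| ≤ r
    have hSum : ∀ z : ℝ, |z| ≤ r → ∀ N : ℕ,
        |(∑ k ∈ Finset.range N, (G r)^[k] f z) - ∑ k ∈ Finset.range N, (δ 0)^k * f 0|
          ≤ K₃ * r := by
      intro z hz N
      rw [← Finset.sum_sub_distrib]
      have hnn : (0:ℝ) ≤ 2*(K₁+K₂)*r :=
        mul_nonneg (by linarith) hr.le
      calc |∑ k ∈ Finset.range N, ((G r)^[k] f z - (δ 0)^k * f 0)|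
          ≤ ∑ k ∈ Finset.range N, |(G r)^[k] f z - (δ 0)^k * f 0| :=
            Finset.abs_sum_le_sum_abs _ _
        _ ≤ ∑ k ∈ Finset.range N, δ₂^k * (2*(K₁+K₂)*r) := by
            apply Finset.sum_le_sum
            intro k _
            calc |(G r)^[k] f z - (δ 0)^k * f 0|
                ≤ δ₂^k * ((K₁*r + K₂*|z|)*(1+|z|)) := boundB k z
              _ ≤ δ₂^k * (2*(K₁+K₂)*r) := by
                  apply mul_le_mul_of_nonneg_left _ (powpos2 k).le
                  have h1 : K₁*r + K₂*|z| ≤ (K₁+K₂)*r := by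
                    have := mul_le_mul_of_nonneg_left hz hK₂0; linarith
                  have h2 : 1+|z| ≤ 1+r := by linarith
                  have h3 : 0 ≤ K₁*r + K₂*|z| := by
                    have := mul_nonneg hK₁0 hr.le
                    have := mul_nonneg hK₂0 (abs_nonneg z)
                    linarith
                  calc (K₁*r + K₂*|z|)*(1+|z|) ≤ ((K₁+K₂)*r)*(1+r) :=
                        mul_le_mul h1 h2 (by linarith [abs_nonneg z])
                          (mul_nonneg (by linarith) hr.le)
                    _ ≤ 2*(K₁+K₂)*r := arith5 (by linarith) hr.le hr1
        _ = (∑ k ∈ Finset.range N, δ₂^k) * (2*(K₁+K₂)*r) := by rw [← Finset.sum_mul]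
        _ ≤ (1/(1-δ₃)) * (2*(K₁+K₂)*r) := mul_le_mul_of_nonneg_right (hgeo N) hnn
        _ = K₃ * r := by
            rw [hK₃def]
            have hne : (1:ℝ) - δ₃ ≠ 0 := by linarith
            field_simp
    -- bound on Y
    have hYb : ∀ z : ℝ, |z| ≤ r → |Y r z - c| ≤ K₃ * r := by
      intro z hz
      have hδ0 : ‖δ 0‖ < 1 := by
        rw [Real.norm_eq_abs]; exact lt_of_le_of_lt (hδb 0) hδbar1
      have hgs : HasSum (fun k : ℕ => (δ 0)^k * f 0) ((1 - δ 0)⁻¹ * f 0) :=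
        (hasSum_geometric_of_norm_lt_one hδ0).mul_right (f 0)
      have hTlim := hgs.tendsto_sum_nat
      have hlim : Tendsto (fun N => (∑ k ∈ Finset.range N, (G r)^[k] f z) -
          ∑ k ∈ Finset.range N, (δ 0)^k * f 0) atTop (nhds (Y r z - (1 - δ 0)⁻¹ * f 0)) :=
        (hY r hr z).sub hTlim
      have hc' : c = (1 - δ 0)⁻¹ * f 0 := by rw [hcdef, div_eq_inv_mul]
      rw [hc']
      exact le_of_tendsto hlim.abs (Filter.Eventually.of_forall (hSum z hz))
    -- measurability and integrability of Y r
    have hmeas : StronglyMeasurable (Y r) := by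
      apply stronglyMeasurable_of_tendsto
        (f := fun N z => ∑ k ∈ Finset.range N, (G r)^[k] f z) atTop
      · intro N
        exact (continuous_finset_sum _ (fun k _ => cont k)).stronglyMeasurable
      · rw [tendsto_pi_nhds]; exact hY r hr
    have hrle : -r ≤ r := by linarith
    have hint : IntervalIntegrable (Y r) MeasureTheory.volume (-r) r := by
      rw [intervalIntegrable_iff, Set.uIoc_of_le hrle]
      apply MeasureTheory.Integrable.mono'
        (g := fun _ => |c| + K₃*r) ((integrableOn_const_iff).mpr (Or.inr measure_Ioc_lt_top))
      · exact hmeas.aestronglyMeasurable.restrict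
      · rw [MeasureTheory.ae_restrict_iff' measurableSet_Ioc]
        apply Filter.Eventually.of_forall
        intro z hzI
        have hz : |z| ≤ r := by
          rw [abs_le]; exact ⟨hzI.1.le, hzI.2⟩
        have h1 := hYb z hz
        rw [Real.norm_eq_abs]
        calc |Y r z| = |(Y r z - c) + c| := by ring_nf
          _ ≤ |Y r z - c| + |c| := abs_add_le _ _
          _ ≤ |c| + K₃*r := by linarith
    -- final integral estimate
    have hYint : ∫ z in (-r)..r, (Y r z - c) = (∫ z in (-r)..r, Y r z) - 2*r*c := by
      rw [intervalIntegral.integral_sub hint intervalIntegrable_const,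
          intervalIntegral.integral_const, smul_eq_mul]
      ring_nf
    have hbnd : |∫ z in (-r)..r, (Y r z - c)| ≤ (K₃*r) * (2*r) := by
      have habs2 : |r - (-r)| = 2*r := by rw [abs_of_pos (by linarith : (0:ℝ) < r - (-r))]; ring
      rw [← Real.norm_eq_abs, ← habs2]
      apply intervalIntegral.norm_integral_le_of_norm_le_const
      intro u hu
      rw [Set.uIoc_of_le hrle] at hu
      have hz : |u| ≤ r := by rw [abs_le]; exact ⟨hu.1.le, hu.2⟩
      rw [Real.norm_eq_abs]
      exact hYb u hz
    rw [hYint] at hbnd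
    rw [hμ r]
    have heq2 : 1/(2*r) * (∫ z in (-r)..r, Y r z) - c
        = (1/(2*r)) * ((∫ z in (-r)..r, Y r z) - 2*r*c) := by
      field_simp
    rw [heq2, abs_mul, abs_of_pos (show (0:ℝ) < 1/(2*r) by positivity)]
    calc 1/(2*r) * |(∫ z in (-r)..r, Y r z) - 2*r*c| ≤ 1/(2*r) * ((K₃*r)*(2*r)) :=
          mul_le_mul_of_nonneg_left hbnd (by positivity)
      _ = K₃ * r := by field_simp
  -- conclude by squeezing
  rw [show f 0 / (1 - δ 0) = c from hcdef.symm]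
  rw [← tendsto_sub_nhds_zero_iff]
  apply squeeze_zero_norm' (a := fun r => K₃ * r)
  · filter_upwards [Ioo_mem_nhdsGT_of_mem
      (show (0:ℝ) ∈ Ico 0 r₀ from ⟨le_refl 0, hr₀0⟩)] with r hrm
    rw [Real.norm_eq_abs]
    exact main r hrm.1 hrm.2.le
  · have h : Tendsto (fun x : ℝ => K₃*x) (nhdsWithin 0 (Set.Ioi 0)) (nhds (K₃*0)) :=
      ((continuous_const.mul continuous_id).tendsto 0).mono_left nhdsWithin_le_nhds
    simpa using h

theorem stmt_18 (C Cδ Cγ δbar τd : ℝ) (hδbar0 : 0 ≤ δbar) (hδbar1 : δbar < 1)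
    (mp mm δ δ' γ γ' : ℝ → ℝ)
    (hmp : ∀ x y, |mp x - mp y| ≤ C * |x - y|)
    (hmm : ∀ x y, |mm x - mm y| ≤ C * |x - y|)
    (hδderiv : ∀ z, HasDerivAt δ (δ' z) z) (hδ' : ∀ z, |δ' z| ≤ Cδ)
    (hδb : ∀ z, |δ z| ≤ δbar)
    (hγderiv : ∀ z, HasDerivAt γ (γ' z) z) (hγ' : ∀ z, |γ' z| ≤ Cγ)
    (hτ : τd = mp 0 - mm 0)
    (G : ℝ → (ℝ → ℝ) → ℝ → ℝ)
    (hG : ∀ r f z, G r f z = δ z * (1 / (2 * r)) * ∫ u in z - r..z + r, f u)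
    (Yι Y0 : ℝ → ℝ → ℝ)
    (hYι : ∀ r : ℝ, 0 < r → ∀ z, Filter.Tendsto
      (fun N => ∑ k ∈ Finset.range N, ((G r)^[k] (fun u => mp u + γ u)) z)
      Filter.atTop (nhds (Yι r z)))
    (hY0 : ∀ r : ℝ, 0 < r → ∀ z, Filter.Tendsto
      (fun N => ∑ k ∈ Finset.range N, ((G r)^[k] mm) z)
      Filter.atTop (nhds (Y0 r z)))
    (μι μ0 : ℝ → ℝ)
    (hμι : ∀ r, μι r = (1 / (2 * r)) * ∫ z in (-r)..r, Yι r z)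
    (hμ0 : ∀ r, μ0 r = (1 / (2 * r)) * ∫ z in (-r)..r, Y0 r z) :
    Filter.Tendsto μι (nhdsWithin 0 (Set.Ioi 0)) (nhds ((mp 0 + γ 0) / (1 - δ 0))) ∧
    Filter.Tendsto μ0 (nhdsWithin 0 (Set.Ioi 0)) (nhds (mm 0 / (1 - δ 0))) ∧
    Filter.Tendsto (fun r => τd + δ 0 * (μι r - μ0 r) + γ 0)
      (nhdsWithin 0 (Set.Ioi 0)) (nhds ((τd + γ 0) / (1 - δ 0))) := by
  have hδL : ∀ x y, |δ x - δ y| ≤ Cδ * |x - y| := lip_of_deriv δ δ' Cδ hδderiv hδ'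
  have hγL : ∀ x y, |γ x - γ y| ≤ Cγ * |x - y| := lip_of_deriv γ γ' Cγ hγderiv hγ'
  have hδc : Continuous δ := cont_of_lip δ Cδ hδL
  have hf₁ : ∀ x y, |(mp x + γ x) - (mp y + γ y)| ≤ (C + Cγ) * |x - y| := by
    intro x y
    calc |(mp x + γ x) - (mp y + γ y)| = |(mp x - mp y) + (γ x - γ y)| := by ring_nf
      _ ≤ |mp x - mp y| + |γ x - γ y| := abs_add_le _ _
      _ ≤ C * |x - y| + Cγ * |x - y| := add_le_add (hmp x y) (hγL x y)
      _ = (C + Cγ) * |x - y| := by ring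
  have h1 : Filter.Tendsto μι (nhdsWithin 0 (Set.Ioi 0))
      (nhds ((mp 0 + γ 0) / (1 - δ 0))) :=
    key_tendsto (C + Cγ) Cδ δbar hδbar0 hδbar1 (fun u => mp u + γ u) δ hf₁
      (cont_of_lip _ (C + Cγ) hf₁) hδL hδc hδb G hG Yι hYι μι hμι
  have h2 : Filter.Tendsto μ0 (nhdsWithin 0 (Set.Ioi 0)) (nhds (mm 0 / (1 - δ 0))) :=
    key_tendsto C Cδ δbar hδbar0 hδbar1 mm δ hmm
      (cont_of_lip _ C hmm) hδL hδc hδb G hG Y0 hY0 μ0 hμ0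
  refine ⟨h1, h2, ?_⟩
  have hδ0 : δ 0 < 1 := lt_of_le_of_lt ((le_abs_self (δ 0)).trans (hδb 0)) hδbar1
  have hne : (1:ℝ) - δ 0 ≠ 0 := by linarith
  have h3 : Filter.Tendsto (fun r => τd + δ 0 * (μι r - μ0 r) + γ 0)
      (nhdsWithin 0 (Set.Ioi 0))
      (nhds (τd + δ 0 * ((mp 0 + γ 0) / (1 - δ 0) - mm 0 / (1 - δ 0)) + γ 0)) :=
    (((h1.sub h2).const_mul (δ 0)).const_add τd).add_const (γ 0)
  have heq : (τd + γ 0) / (1 - δ 0)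
      = τd + δ 0 * ((mp 0 + γ 0) / (1 - δ 0) - mm 0 / (1 - δ 0)) + γ 0 := by
    rw [hτ]
    field_simp
    ring
  rw [heq]
  exact h3
end
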